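/- arXiv:1304.6281 — 3 statements merged into one kernel-verified Lean document; each statement's English description precedes it below -/
import Mathlib

section
/- For real parameters μ, ν > 0 and β > 0, ∫_0^∞ x^{ν-1}·(x+β)^{ν-1}·e^{-μx} dx = (1/√π)·(β/μ)^{ν-1/2}·e^{βμ/2}·Γ(ν)·K_{1/2-ν}(βμ/2), where K is the modified Bessel function of the second kind. -/
/-!
Write `z = βμ/2` and `G(ρ, a) = ∫₀^∞ s^(ρ-1) e^(-s - a²/(4s)) ds`. The substitution
`s = (a/2)eᵗ` gives `G(ρ, a) = 2 (a/2)^ρ K_ρ(a)`, hence `G(ρ, a) = (a/2)^(2ρ) G(-ρ, a)`, and the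
Gaussian integral under `y = √s - (a/2)/√s` then evaluates `G(-1/2, a) = 2√π e^(-a) / a`.

For the left-hand side, write `Γ(ν) = k^ν ∫₀^∞ r^(ν-1) e^(-kr) dr` with `r = x(x+β)` and
`k = μ²/(4s)`, multiply by the integrand of `G(ν - 1/2, z)` and exchange the order of
integration. Since `z² + μ²x(x+β) = (μx + z)²`, the inner `s`-integral is `G(-1/2, μx + z)`,
which produces `e^(-μx)`; altogether
`Γ(ν) G(ν - 1/2, z) = 2√π (μ/2)^(2ν-1) e^(-z) ∫₀^∞ x^(ν-1) (x+β)^(ν-1) e^(-μx) dx`.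
All integrals are lower Lebesgue integrals of nonnegative functions, so Tonelli applies freely.
-/

open Real MeasureTheory Set
open scoped ENNReal

/-- The modified Bessel function of the second kind (integral representation). -/
noncomputable def besselK (ν x : ℝ) : ℝ :=
  ∫ t in Set.Ioi (0 : ℝ), Real.exp (-x * Real.cosh t) * Real.cosh (ν * t)

-- The unnormalised density of the generalized inverse Gaussian distribution.
noncomputable def gigIntegrand (ρ a s : ℝ) : ℝ := s ^ (ρ - 1) * exp (-s - a ^ 2 / (4 * s))

noncomputable def gigLIntegral (ρ a : ℝ) : ℝ≥0∞ :=
  ∫⁻ s in Ioi 0, ENNReal.ofReal (gigIntegrand ρ a s)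

theorem lintegral_exp_neg_sq :
    ∫⁻ x : ℝ, ENNReal.ofReal (exp (-x ^ 2)) = ENNReal.ofReal √π := by
  rw [← ofReal_integral_eq_lintegral_ofReal (by simpa using integrable_exp_neg_mul_sq one_pos)
    (.of_forall fun x => (exp_pos _).le)]
  simpa using congrArg ENNReal.ofReal (integral_gaussian 1)

theorem lintegral_rpow_mul_exp_neg_mul_Ioi {a r : ℝ} (ha : 0 < a) (hr : 0 < r) :
    ∫⁻ t in Ioi 0, ENNReal.ofReal (t ^ (a - 1) * exp (-(r * t))) =
      ENNReal.ofReal ((1 / r) ^ a * Gamma a) := by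
  have hint : IntegrableOn (fun t : ℝ => t ^ (a - 1) * exp (-(r * t))) (Ioi 0) := by
    simpa [neg_mul] using
      integrableOn_rpow_mul_exp_neg_mul_rpow (p := 1) (by linarith) one_pos hr
  rw [← integral_rpow_mul_exp_neg_mul_Ioi ha hr, ofReal_integral_eq_lintegral_ofReal hint
    ((ae_restrict_iff' measurableSet_Ioi).mpr (.of_forall fun t (ht : 0 < t) => by positivity))]

theorem lintegral_eq_lintegral_Ioi_add_lintegral_Ioi_comp_neg (g : ℝ → ℝ≥0∞) :
    ∫⁻ t, g t = (∫⁻ t in Ioi 0, g t) + ∫⁻ t in Ioi 0, g (-t) := by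
  have hneg := lintegral_image_eq_lintegral_abs_deriv_mul (measurableSet_Ioi (a := (0 : ℝ)))
    (fun t _ => (hasDerivAt_neg t).hasDerivWithinAt) neg_injective.injOn g
  simp only [image_neg_Ioi, neg_zero, abs_neg, abs_one, ENNReal.ofReal_one, one_mul] at hneg
  rw [← hneg, ← lintegral_add_compl g (measurableSet_Iio (a := (0 : ℝ))), compl_Iio,
    ← setLIntegral_congr (Ioi_ae_eq_Ici (μ := volume) (a := (0 : ℝ))), add_comm]

theorem strictMonoOn_sqrt_sub_div_sqrt {c : ℝ} (hc : 0 ≤ c) :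
    StrictMonoOn (fun s => √s - c / √s) (Ioi 0) := by
  intro x (hx : 0 < x) y _ hxy
  have hsqrt : √x < √y := sqrt_lt_sqrt hx.le hxy
  have : c / √y ≤ c / √x := div_le_div_of_nonneg_left hc (sqrt_pos.mpr hx) hsqrt.le
  dsimp only
  linarith

theorem image_sqrt_sub_div_sqrt_Ioi {c : ℝ} (hc : 0 < c) :
    (fun s => √s - c / √s) '' Ioi 0 = univ := by
  refine eq_univ_of_forall fun y => ?_
  set u := (y + √(y ^ 2 + 4 * c)) / 2
  have hdisc : √(y ^ 2 + 4 * c) ^ 2 = y ^ 2 + 4 * c := sq_sqrt (by positivity)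
  have hu : 0 < u := by
    have : |y| < √(y ^ 2 + 4 * c) := by
      rw [← sqrt_sq_eq_abs]; exact sqrt_lt_sqrt (sq_nonneg y) (by linarith)
    simp only [u]
    linarith [neg_abs_le y]
  refine ⟨u ^ 2, pow_pos hu 2, ?_⟩
  dsimp only
  rw [sqrt_sq hu.le]
  field_simp
  linear_combination (1 / 4 : ℝ) * hdisc

theorem hasDerivAt_sqrt_sub_div_sqrt (c : ℝ) {s : ℝ} (hs : 0 < s) :
    HasDerivAt (fun s => √s - c / √s) ((1 + c / s) / (2 * √s)) s := by
  have hsqrt := hasDerivAt_sqrt hs.ne'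
  refine (hsqrt.sub ((hasDerivAt_const s c).div hsqrt (sqrt_pos.mpr hs).ne')).congr_deriv ?_
  have := sq_sqrt hs.le
  field_simp
  rw [this]
  ring

theorem strictMonoOn_mul_add_self {β : ℝ} (hβ : 0 ≤ β) :
    StrictMonoOn (fun x => x * (x + β)) (Ioi 0) := by
  intro x (hx : 0 < x) y _ hxy
  dsimp only
  nlinarith [mul_pos (sub_pos.mpr hxy) (by linarith : 0 < x + y + β)]

theorem image_mul_add_self_Ioi {β : ℝ} (hβ : 0 ≤ β) :
    (fun x => x * (x + β)) '' Ioi 0 = Ioi 0 := by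
  ext y
  refine ⟨?_, fun (hy : 0 < y) => ?_⟩
  · rintro ⟨x, hx : 0 < x, rfl⟩
    exact mul_pos hx (by linarith)
  · have hdisc : √(β ^ 2 + 4 * y) ^ 2 = β ^ 2 + 4 * y := sq_sqrt (by positivity)
    have hβlt : β < √(β ^ 2 + 4 * y) := by
      rw [lt_sqrt hβ]; linarith
    refine ⟨(√(β ^ 2 + 4 * y) - β) / 2, by simp only [mem_Ioi]; linarith, ?_⟩
    linear_combination hdisc / 4

theorem lintegral_Ioi_comp_mul_add_self {β : ℝ} (hβ : 0 ≤ β) (g : ℝ → ℝ≥0∞) :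
    ∫⁻ x in Ioi 0, ENNReal.ofReal (2 * x + β) * g (x * (x + β)) = ∫⁻ r in Ioi 0, g r := by
  have hderiv (x : ℝ) : HasDerivAt (fun x => x * (x + β)) (2 * x + β) x :=
    ((hasDerivAt_id' x).mul ((hasDerivAt_id' x).add_const β)).congr_deriv (by ring)
  conv_rhs => rw [← image_mul_add_self_Ioi hβ, lintegral_image_eq_lintegral_abs_deriv_mul
    measurableSet_Ioi (fun x _ => (hderiv x).hasDerivWithinAt) (strictMonoOn_mul_add_self hβ).injOn]
  refine setLIntegral_congr_fun measurableSet_Ioi fun x (hx : 0 < x) => ?_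
  rw [abs_of_pos (by linarith)]

theorem gigLIntegral_eq_lintegral_exp_sub_mul_cosh {a : ℝ} (ha : 0 < a) (ρ : ℝ) :
    gigLIntegral ρ a =
      ENNReal.ofReal ((a / 2) ^ ρ) * ∫⁻ t, ENNReal.ofReal (exp (ρ * t - a * cosh t)) := by
  have himage : (fun t => a / 2 * exp t) '' univ = Ioi 0 := by
    rw [image_univ, show (fun t => a / 2 * exp t) = (a / 2 * ·) ∘ exp from rfl, range_comp,
      range_exp, image_mul_left_Ioi (by positivity), mul_zero]
  rw [gigLIntegral, ← himage, lintegral_image_eq_lintegral_abs_deriv_mul MeasurableSet.univ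
      (fun t _ => ((hasDerivAt_exp t).const_mul (a / 2)).hasDerivWithinAt)
      ((mul_right_injective₀ (by positivity : a / 2 ≠ 0)).comp exp_injective).injOn _,
    Measure.restrict_univ, ← lintegral_const_mul' _ _ ENNReal.ofReal_ne_top]
  refine lintegral_congr fun t => ?_
  have hs : 0 < a / 2 * exp t := by positivity
  rw [abs_of_pos hs, ← ENNReal.ofReal_mul hs.le, ← ENNReal.ofReal_mul (by positivity)]
  congr 1
  have hpow : a / 2 * exp t * (a / 2 * exp t) ^ (ρ - 1) = (a / 2) ^ ρ * exp (ρ * t) := by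
    rw [rpow_sub_one hs.ne', mul_div_cancel₀ _ hs.ne', mul_rpow (by positivity) (exp_pos t).le,
      ← exp_mul, mul_comm t]
  have hexp : -(a / 2 * exp t) - a ^ 2 / (4 * (a / 2 * exp t)) = -(a * cosh t) := by
    rw [cosh_eq, exp_neg]
    field_simp
    ring
  rw [gigIntegrand, ← mul_assoc, hpow, hexp, mul_assoc, ← exp_add, sub_eq_add_neg]

theorem gigLIntegral_eq_lintegral_exp_neg_mul_cosh_mul_cosh {a : ℝ} (ha : 0 < a) (ρ : ℝ) :
    gigLIntegral ρ a = ENNReal.ofReal (2 * (a / 2) ^ ρ) *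
      ∫⁻ t in Ioi 0, ENNReal.ofReal (exp (-a * cosh t) * cosh (ρ * t)) := by
  have hsym : ∀ t, ENNReal.ofReal (exp (ρ * t - a * cosh t)) +
      ENNReal.ofReal (exp (ρ * -t - a * cosh (-t))) =
        ENNReal.ofReal 2 * ENNReal.ofReal (exp (-a * cosh t) * cosh (ρ * t)) := fun t => by
    rw [← ENNReal.ofReal_add (exp_pos _).le (exp_pos _).le, ← ENNReal.ofReal_mul zero_le_two,
      cosh_neg, cosh_eq (ρ * t), sub_eq_add_neg, sub_eq_add_neg, exp_add, exp_add, ← neg_mul]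
    ring_nf
  rw [gigLIntegral_eq_lintegral_exp_sub_mul_cosh ha,
    lintegral_eq_lintegral_Ioi_add_lintegral_Ioi_comp_neg,
    ← lintegral_add_left (by fun_prop), lintegral_congr hsym,
    lintegral_const_mul' _ _ ENNReal.ofReal_ne_top, ← mul_assoc,
    ← ENNReal.ofReal_mul (by positivity), mul_comm ((a / 2) ^ ρ)]

theorem gigLIntegral_eq_mul_gigLIntegral_neg {a : ℝ} (ha : 0 < a) (ρ : ℝ) :
    gigLIntegral ρ a = ENNReal.ofReal ((a / 2) ^ (2 * ρ)) * gigLIntegral (-ρ) a := by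
  have hpow : 2 * (a / 2) ^ ρ = (a / 2) ^ (2 * ρ) * (2 * (a / 2) ^ (-ρ)) := by
    rw [mul_left_comm, ← rpow_add (by positivity)]
    ring_nf
  simp only [gigLIntegral_eq_lintegral_exp_neg_mul_cosh_mul_cosh ha, neg_mul ρ, cosh_neg]
  rw [← mul_assoc, ← ENNReal.ofReal_mul (by positivity), hpow]

theorem besselK_neg (ρ x : ℝ) : besselK (-ρ) x = besselK ρ x := by
  simp only [besselK, neg_mul ρ, cosh_neg]

theorem besselK_eq_toReal_gigLIntegral_div {z : ℝ} (hz : 0 < z) (ρ : ℝ) :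
    besselK ρ z = (gigLIntegral ρ z).toReal / (2 * (z / 2) ^ ρ) := by
  rw [gigLIntegral_eq_lintegral_exp_neg_mul_cosh_mul_cosh hz, ENNReal.toReal_mul,
    ENNReal.toReal_ofReal (by positivity), mul_div_cancel_left₀ _ (by positivity), besselK,
    integral_eq_lintegral_of_nonneg_ae (.of_forall fun t => by positivity) (by fun_prop)]

theorem gigLIntegral_neg_one_half {a : ℝ} (ha : 0 < a) :
    gigLIntegral (-1 / 2) a = ENNReal.ofReal (2 * √π / a * exp (-a)) := by
  have hpoint : ∀ s ∈ Ioi (0 : ℝ),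
      ENNReal.ofReal |(1 + a / 2 / s) / (2 * √s)| *
          ENNReal.ofReal (exp (-(√s - a / 2 / √s) ^ 2)) =
        ENNReal.ofReal (exp a / 2) * ENNReal.ofReal (gigIntegrand (1 / 2) a s) +
          ENNReal.ofReal (exp a / 2 * (a / 2)) * ENNReal.ofReal (gigIntegrand (-1 / 2) a s) := by
    intro s (hs : 0 < s)
    have hsq : √s ^ 2 = s := sq_sqrt hs.le
    have hsquare : -(√s - a / 2 / √s) ^ 2 = a + (-s - a ^ 2 / (4 * s)) := by
      field_simp
      rw [hsq]
      ring
    have : 0 < √s := sqrt_pos.mpr hs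
    rw [gigIntegrand, gigIntegrand, rpow_sub_one hs.ne', rpow_sub_one hs.ne', neg_div,
      rpow_neg hs.le, ← sqrt_eq_rpow, hsquare, exp_add, abs_of_pos (by positivity),
      ← ENNReal.ofReal_mul (by positivity), ← ENNReal.ofReal_mul (by positivity),
      ← ENNReal.ofReal_mul (by positivity), ← ENNReal.ofReal_add (by positivity) (by positivity)]
    congr 1
    generalize exp (-s - a ^ 2 / (4 * s)) = e
    field_simp
    rw [hsq]
    ring
  have hgauss : ENNReal.ofReal √π = ENNReal.ofReal (exp a / 2) * gigLIntegral (1 / 2) a +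
      ENNReal.ofReal (exp a / 2 * (a / 2)) * gigLIntegral (-1 / 2) a := by
    rw [← lintegral_exp_neg_sq, ← Measure.restrict_univ (μ := volume),
      ← image_sqrt_sub_div_sqrt_Ioi (half_pos ha),
      lintegral_image_eq_lintegral_abs_deriv_mul measurableSet_Ioi
        (fun s hs => (hasDerivAt_sqrt_sub_div_sqrt _ hs).hasDerivWithinAt)
        (strictMonoOn_sqrt_sub_div_sqrt (half_pos ha).le).injOn,
      setLIntegral_congr_fun measurableSet_Ioi hpoint,
      lintegral_add_left (by unfold gigIntegrand; fun_prop),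
      lintegral_const_mul' _ _ ENNReal.ofReal_ne_top,
      lintegral_const_mul' _ _ ENNReal.ofReal_ne_top]
    rfl
  have hsqrtπ :
      ENNReal.ofReal √π = ENNReal.ofReal (exp a * (a / 2)) * gigLIntegral (-1 / 2) a := by
    rw [hgauss, gigLIntegral_eq_mul_gigLIntegral_neg ha, ← neg_div, ← mul_assoc,
      ← ENNReal.ofReal_mul (by positivity), ← add_mul,
      ← ENNReal.ofReal_add (by positivity) (by positivity),
      show (2 : ℝ) * (1 / 2) = 1 by norm_num, rpow_one]
    ring_nf
  refine (ENNReal.mul_right_inj (a := ENNReal.ofReal (exp a * (a / 2)))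
    (ENNReal.ofReal_pos.mpr (by positivity)).ne' ENNReal.ofReal_ne_top).mp ?_
  rw [← hsqrtπ, ← ENNReal.ofReal_mul (by positivity)]
  have hexp : exp a * exp (-a) = 1 := by rw [← exp_add, add_neg_cancel, exp_zero]
  congr 1
  field_simp
  exact hexp.symm

theorem Gamma_mul_gigIntegrand_eq_lintegral {μ ν β s : ℝ} (hμ : 0 < μ) (hν : 0 < ν)
    (hβ : 0 ≤ β) (hs : 0 < s) :
    ENNReal.ofReal (Gamma ν) * ENNReal.ofReal (gigIntegrand (ν - 1 / 2) (β * μ / 2) s) =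
      ∫⁻ x in Ioi 0, ENNReal.ofReal (((μ / 2) ^ 2) ^ ν * (2 * x + β) * (x * (x + β)) ^ (ν - 1)) *
        ENNReal.ofReal (gigIntegrand (-1 / 2) (μ * x + β * μ / 2) s) := by
  set k := (μ / 2) ^ 2 / s
  have hk : 0 < k := by positivity
  have hGamma : ENNReal.ofReal (Gamma ν) = ENNReal.ofReal (k ^ ν) * ∫⁻ x in Ioi 0,
      ENNReal.ofReal (2 * x + β) *
        ENNReal.ofReal ((x * (x + β)) ^ (ν - 1) * exp (-(k * (x * (x + β))))) := by
    rw [lintegral_Ioi_comp_mul_add_self hβ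
        (fun r => ENNReal.ofReal (r ^ (ν - 1) * exp (-(k * r)))),
      lintegral_rpow_mul_exp_neg_mul_Ioi hν hk, ← ENNReal.ofReal_mul (by positivity),
      ← mul_assoc, ← mul_rpow hk.le (by positivity), mul_one_div_cancel hk.ne', one_rpow, one_mul]
  rw [hGamma, mul_comm, ← lintegral_const_mul' _ _ ENNReal.ofReal_ne_top,
    ← lintegral_const_mul' _ _ ENNReal.ofReal_ne_top]
  refine setLIntegral_congr_fun measurableSet_Ioi fun x (hx : 0 < x) => ?_
  simp only [gigIntegrand]
  rw [← ENNReal.ofReal_mul (by positivity), ← ENNReal.ofReal_mul (by positivity),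
    ← ENNReal.ofReal_mul (by positivity), ← ENNReal.ofReal_mul (by positivity)]
  congr 1
  have hpow : s ^ (ν - 1 / 2 - 1) = s ^ ν * s ^ (-1 / 2 - 1 : ℝ) := by
    rw [← rpow_add hs]; ring_nf
  have hexp : exp (-s - (β * μ / 2) ^ 2 / (4 * s)) * exp (-(k * (x * (x + β)))) =
      exp (-s - (μ * x + β * μ / 2) ^ 2 / (4 * s)) := by
    rw [← exp_add]; congr 1; simp only [k]; field_simp; ring
  rw [div_rpow (by positivity) hs.le, hpow, ← hexp]
  field_simp

theorem lintegral_mul_gigIntegrand_neg_one_half {μ ν β x : ℝ} (hμ : 0 < μ) (hβ : 0 ≤ β)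
    (hx : 0 < x) :
    ∫⁻ s in Ioi 0, ENNReal.ofReal (((μ / 2) ^ 2) ^ ν * (2 * x + β) * (x * (x + β)) ^ (ν - 1)) *
        ENNReal.ofReal (gigIntegrand (-1 / 2) (μ * x + β * μ / 2) s) =
      ENNReal.ofReal (2 * √π * ((μ / 2) ^ 2) ^ (ν - 1 / 2) * exp (-(β * μ / 2)) *
        (x ^ (ν - 1) * (x + β) ^ (ν - 1) * exp (-μ * x))) := by
  rw [lintegral_const_mul' _ _ ENNReal.ofReal_ne_top]
  change _ * gigLIntegral _ _ = _
  rw [gigLIntegral_neg_one_half (by positivity), ← ENNReal.ofReal_mul (by positivity)]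
  congr 1
  have hsqrt : ((μ / 2) ^ 2) ^ (1 / 2 : ℝ) = μ / 2 := by
    rw [← sqrt_eq_rpow, sqrt_sq (by positivity)]
  rw [rpow_sub (by positivity : (0 : ℝ) < (μ / 2) ^ 2) ν, hsqrt,
    mul_rpow hx.le (by positivity), show -(μ * x + β * μ / 2) = -μ * x + -(β * μ / 2) by ring,
    exp_add]
  field_simp

theorem Gamma_mul_gigLIntegral {μ ν β : ℝ} (hμ : 0 < μ) (hν : 0 < ν) (hβ : 0 ≤ β) :
    ENNReal.ofReal (Gamma ν) * gigLIntegral (ν - 1 / 2) (β * μ / 2) =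
      ENNReal.ofReal (2 * √π * ((μ / 2) ^ 2) ^ (ν - 1 / 2) * exp (-(β * μ / 2))) *
        ∫⁻ x in Ioi 0, ENNReal.ofReal (x ^ (ν - 1) * (x + β) ^ (ν - 1) * exp (-μ * x)) := by
  rw [gigLIntegral, ← lintegral_const_mul' _ _ ENNReal.ofReal_ne_top,
    setLIntegral_congr_fun measurableSet_Ioi
      fun s hs => Gamma_mul_gigIntegrand_eq_lintegral hμ hν hβ hs,
    lintegral_lintegral_swap (by unfold gigIntegrand; fun_prop),
    setLIntegral_congr_fun measurableSet_Ioi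
      fun x hx => lintegral_mul_gigIntegrand_neg_one_half hμ hβ hx,
    ← lintegral_const_mul' _ _ ENNReal.ofReal_ne_top]
  simp_rw [ENNReal.ofReal_mul
    (by positivity : 0 ≤ 2 * √π * ((μ / 2) ^ 2) ^ (ν - 1 / 2) * exp (-(β * μ / 2)))]

theorem integral_rpow_mul_shift_rpow_mul_exp (μ ν β : ℝ) (hμ : 0 < μ) (hν : 0 < ν)
    (hβ : 0 < β) :
    ∫ x in Set.Ioi (0 : ℝ), x ^ (ν - 1) * (x + β) ^ (ν - 1) * Real.exp (-μ * x) =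
      (1 / Real.sqrt Real.pi) * (β / μ) ^ (ν - 1 / 2) * Real.exp (β * μ / 2) *
        Real.Gamma ν * besselK (1 / 2 - ν) (β * μ / 2) := by
  -- `toReal` is multiplicative, so no finiteness of `gigLIntegral` is needed.
  have hkey := congrArg ENNReal.toReal (Gamma_mul_gigLIntegral hμ hν hβ.le)
  rw [ENNReal.toReal_mul, ENNReal.toReal_mul, ENNReal.toReal_ofReal (Gamma_pos_of_pos hν).le,
    ENNReal.toReal_ofReal (by positivity)] at hkey
  rw [integral_eq_lintegral_of_nonneg_ae ((ae_restrict_iff' measurableSet_Ioi).mpr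
      (.of_forall fun x (hx : 0 < x) => by positivity)) (by fun_prop),
    show 1 / 2 - ν = -(ν - 1 / 2) by ring, besselK_neg,
    besselK_eq_toReal_gigLIntegral_div (by positivity)]
  generalize (gigLIntegral (ν - 1 / 2) (β * μ / 2)).toReal = G at hkey ⊢
  generalize
    (∫⁻ x in Ioi 0, ENNReal.ofReal (x ^ (ν - 1) * (x + β) ^ (ν - 1) * exp (-μ * x))).toReal = L
    at hkey ⊢
  have hpow : (β / μ) ^ (ν - 1 / 2) * ((μ / 2) ^ 2) ^ (ν - 1 / 2) =
      (β * μ / 2 / 2) ^ (ν - 1 / 2) := by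
    rw [← mul_rpow (by positivity) (by positivity)]
    field_simp
  have hexp : exp (β * μ / 2) * exp (-(β * μ / 2)) = 1 := by
    rw [← exp_add, add_neg_cancel, exp_zero]
  have hP : 0 < (β / μ) ^ (ν - 1 / 2) := by positivity
  have hQ : 0 < ((μ / 2) ^ 2) ^ (ν - 1 / 2) := by positivity
  rw [← hpow]
  generalize (β / μ) ^ (ν - 1 / 2) = P at hP ⊢
  generalize ((μ / 2) ^ 2) ^ (ν - 1 / 2) = Q at hQ hkey ⊢
  field_simp
  linear_combination -exp (β * μ / 2) * hkey - 2 * √π * Q * L * hexp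
end

section
/- For β > 0 and γ > 0 and real ν, ∫_0^∞ x^{ν-1}·e^{-β/x - γx} dx = 2·(β/γ)^{ν/2}·K_ν(2√(βγ)), where K_ν is the modified Bessel function of the second kind. -/
open Real MeasureTheory

/-!
The substitution `x = √(β/γ) · eᵗ` turns the integral into `(β/γ)^(ν/2) ∫_ℝ e^(νt - a cosh t)`
with `a = 2√(βγ)`, because `β e⁻ᵗ/√(β/γ) + γ √(β/γ) eᵗ = √(βγ) (eᵗ + e⁻ᵗ)`. Folding the negative
half-line onto the positive one pairs `e^(νt)` with `e^(-νt)`, which gives `2 cosh (νt)` and hence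
`2 K_ν(a)`. The bound `cosh t ≥ 1 + t²/4` dominates the integrand by a Gaussian, which justifies
the splitting.
-/

open Set

theorem one_add_sq_div_four_le_cosh (t : ℝ) : 1 + t ^ 2 / 4 ≤ cosh t := by
  have h₁ := quadratic_le_exp_of_nonneg (abs_nonneg t)
  have h₂ := add_one_le_exp (-|t|)
  rw [sq_abs] at h₁
  rw [← cosh_abs, cosh_eq]
  linarith

theorem integrable_exp_mul_sub_mul_cosh (μ : ℝ) {a : ℝ} (ha : 0 < a) :
    Integrable fun t => exp (μ * t - a * cosh t) := by
  refine ((integrable_exp_neg_mul_sq (b := a / 8) (by positivity)).const_mul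
    (exp (2 * μ ^ 2 / a))).mono' (by fun_prop) (ae_of_all _ fun t => ?_)
  rw [norm_of_nonneg (exp_pos _).le, ← exp_add, exp_le_exp]
  have hcosh := mul_le_mul_of_nonneg_left (one_add_sq_div_four_le_cosh t) ha.le
  have hsq : 0 ≤ a * t ^ 2 / 8 - μ * t + 2 * μ ^ 2 / a := by
    have : 0 ≤ (a * t - 4 * μ) ^ 2 / (8 * a) := by positivity
    convert this using 1
    field_simp
    ring
  nlinarith

theorem integral_exp_mul_sub_mul_cosh (μ : ℝ) {a : ℝ} (ha : 0 < a) :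
    ∫ t, exp (μ * t - a * cosh t) = 2 * besselK μ a := by
  have hg := integrable_exp_mul_sub_mul_cosh μ ha
  have hIic : ∫ t in Iic 0, exp (μ * t - a * cosh t) =
      ∫ t in Ioi 0, exp (μ * -t - a * cosh (-t)) := by
    simpa using (integral_comp_neg_Ioi 0 fun t => exp (μ * t - a * cosh t)).symm
  rw [← intervalIntegral.integral_Iic_add_Ioi hg.integrableOn hg.integrableOn, hIic,
    ← integral_add hg.comp_neg.integrableOn hg.integrableOn, besselK, ← integral_const_mul]
  refine setIntegral_congr_fun measurableSet_Ioi fun t _ => ?_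
  rw [Real.cosh_neg]
  simp only [mul_neg, neg_mul, sub_eq_add_neg, exp_add, cosh_eq]
  ring

theorem integral_Ioi_rpow_sub_one_mul_eq_integral_exp (ν : ℝ) (f : ℝ → ℝ) :
    ∫ x in Ioi 0, x ^ (ν - 1) * f x = ∫ t, exp (ν * t) * f (exp t) := by
  rw [← range_exp, ← image_univ, integral_image_eq_integral_abs_deriv_smul MeasurableSet.univ
    (fun t _ => (hasDerivAt_exp t).hasDerivWithinAt) exp_injective.injOn, setIntegral_univ]
  refine integral_congr_ae (ae_of_all _ fun t => ?_)
  dsimp only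
  rw [smul_eq_mul, abs_of_pos (exp_pos t), ← exp_mul, ← mul_assoc, ← exp_add]
  ring_nf

theorem integral_exp_mul_mul_comp_exp_eq (ν : ℝ) {c : ℝ} (hc : 0 < c) (f : ℝ → ℝ) :
    ∫ t, exp (ν * t) * f (exp t) = c ^ ν * ∫ t, exp (ν * t) * f (c * exp t) := by
  rw [← integral_add_right_eq_self _ (log c), ← integral_const_mul]
  congr 1 with t
  rw [exp_add, exp_log hc, mul_add, exp_add, rpow_def_of_pos hc]
  ring_nf

theorem integral_rpow_mul_exp_inv_sub (β γ ν : ℝ) (hβ : 0 < β) (hγ : 0 < γ) :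
    ∫ x in Set.Ioi (0 : ℝ), x ^ (ν - 1) * Real.exp (-β / x - γ * x) =
      2 * (β / γ) ^ (ν / 2) * besselK ν (2 * Real.sqrt (β * γ)) := by
  set c := √(β / γ) with hc_def
  have hc : 0 < c := by positivity
  have hβc : β / c = √(β * γ) := by
    rw [hc_def, sqrt_div hβ.le, sqrt_mul hβ.le]
    field_simp
    rw [sq_sqrt hβ.le]
  have hγc : γ * c = √(β * γ) := by
    rw [hc_def, sqrt_div hβ.le, sqrt_mul hβ.le]
    field_simp
    rw [sq_sqrt hγ.le]
  calc ∫ x in Ioi 0, x ^ (ν - 1) * exp (-β / x - γ * x)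
      = ∫ t, exp (ν * t) * exp (-β / exp t - γ * exp t) :=
        integral_Ioi_rpow_sub_one_mul_eq_integral_exp ν _
    _ = c ^ ν * ∫ t, exp (ν * t) * exp (-β / (c * exp t) - γ * (c * exp t)) :=
        integral_exp_mul_mul_comp_exp_eq ν hc fun x => exp (-β / x - γ * x)
    _ = c ^ ν * ∫ t, exp (ν * t - 2 * √(β * γ) * cosh t) := by
        congr 1
        refine integral_congr_ae (ae_of_all _ fun t => ?_)
        dsimp only
        rw [← exp_add, neg_div, ← div_div, hβc, ← mul_assoc, hγc, cosh_eq, exp_neg]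
        congr 1
        ring
    _ = _ := by
        rw [integral_exp_mul_sub_mul_cosh ν (by positivity), hc_def, sqrt_eq_rpow (β / γ),
          ← rpow_mul (div_pos hβ hγ).le]
        ring_nf
end

section
/- Let X₁ and X₂ be independent chi-squared random variables with l degrees of freedom. Then W = X₁ - X₂ has density f_W(w) = |w|^{l/2 - 1/2}·K_{1/2 - l/2}(|w|/2) / (√π · 2^l · Γ(l/2)) for w ≠ 0. -/
/-!
For `w ≠ 0` the density of `X₁ - X₂` is the convolution `∫ f(y) f(y - w) dy` of the chi-squared
density `f`. The substitution `y = w/2 + (|w|/2) cosh t` turns `y (y - w)` into `((|w|/2) sinh t)²`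
and `y + (y - w)` into `|w| cosh t`, so the convolution is a multiple of
`S_{l-1}(|w|/2)`, where `S_m(z) = ∫₀^∞ exp(-z cosh t) sinh^m t dt`.
Integrating by parts against `exp(-z cosh t)` gives a recurrence for `S_m` in steps of two which
matches `K_{ν+1} = K_{ν-1} + (2ν/z) K_ν`; with the cases `m ≤ 3` (where `K_{1/2}` is a Gaussian
integral) this proves `K_{m/2}(z) = √π (z/2)^{m/2} S_m(z) / Γ((m+1)/2)`.
-/

open Real MeasureTheory ProbabilityTheory

/-- The chi-squared distribution with `l` degrees of freedom, via its density. -/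
noncomputable def chiSq (l : ℕ) : Measure ℝ :=
  MeasureTheory.volume.withDensity fun x =>
    ENNReal.ofReal (if 0 ≤ x then
      x ^ ((l : ℝ) / 2 - 1) * Real.exp (-x / 2) / (2 ^ ((l : ℝ) / 2) * Real.Gamma (l / 2))
    else 0)

open Set Filter Topology Asymptotics
open scoped ENNReal

@[fun_prop]
def IsExpBounded (g : ℝ → ℝ) : Prop :=
  ∃ c, g =O[atTop] fun t => exp (c * t)

namespace IsExpBounded

lemma of_abs_le_exp {g : ℝ → ℝ} {c : ℝ} (hg : ∀ t, 0 ≤ t → |g t| ≤ exp (c * t)) :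
    IsExpBounded g :=
  ⟨c, IsBigO.of_bound 1 <| (eventually_ge_atTop 0).mono fun t ht => by
    simpa [abs_of_pos (exp_pos _)] using hg t ht⟩

@[fun_prop]
lemma const (a : ℝ) : IsExpBounded fun _ => a :=
  ⟨0, by simpa using isBigO_const_const a (one_ne_zero (α := ℝ)) (atTop : Filter ℝ)⟩

@[fun_prop]
lemma mul {f g : ℝ → ℝ} (hf : IsExpBounded f) (hg : IsExpBounded g) :
    IsExpBounded fun t => f t * g t := by
  obtain ⟨a, ha⟩ := hf
  obtain ⟨b, hb⟩ := hg
  exact ⟨a + b, (ha.mul hb).congr_right fun t => by rw [← exp_add, add_mul]⟩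

@[fun_prop]
lemma add {f g : ℝ → ℝ} (hf : IsExpBounded f) (hg : IsExpBounded g) :
    IsExpBounded fun t => f t + g t := by
  obtain ⟨a, ha⟩ := hf
  obtain ⟨b, hb⟩ := hg
  have mono : ∀ {c : ℝ}, c ≤ max a b →
      (fun t => exp (c * t)) =O[atTop] fun t => exp (max a b * t) :=
    fun hc => isBigO_exp_comp_exp_comp.2 ⟨0, eventually_map.2 <|
      (eventually_ge_atTop 0).mono fun t ht => by
        simpa [← sub_mul] using mul_nonpos_of_nonpos_of_nonneg (sub_nonpos.2 hc) ht⟩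
  exact ⟨max a b, (ha.trans (mono (le_max_left a b))).add (hb.trans (mono (le_max_right a b)))⟩

@[fun_prop]
lemma neg {f : ℝ → ℝ} (hf : IsExpBounded f) : IsExpBounded fun t => -f t := by
  obtain ⟨a, ha⟩ := hf
  exact ⟨a, ha.neg_left⟩

@[fun_prop]
lemma sub {f g : ℝ → ℝ} (hf : IsExpBounded f) (hg : IsExpBounded g) :
    IsExpBounded fun t => f t - g t := by
  simpa [sub_eq_add_neg] using hf.add hg.neg

@[fun_prop]
lemma pow {f : ℝ → ℝ} (hf : IsExpBounded f) (n : ℕ) : IsExpBounded fun t => f t ^ n := by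
  induction n with
  | zero => simpa using const 1
  | succ n ih => simpa [pow_succ] using ih.mul hf

end IsExpBounded

lemma cosh_le_exp_abs (x : ℝ) : cosh x ≤ exp |x| := by
  rw [← cosh_abs, cosh_eq]
  linarith [exp_le_exp.2 (neg_le_self (abs_nonneg x))]

lemma abs_sinh_le_cosh (x : ℝ) : |sinh x| ≤ cosh x :=
  abs_le.2 ⟨by linarith [sinh_neg x ▸ cosh_neg x ▸ sinh_lt_cosh (-x)], (sinh_lt_cosh x).le⟩

@[fun_prop]
lemma isExpBounded_cosh_mul (ν : ℝ) : IsExpBounded fun t => cosh (ν * t) :=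
  IsExpBounded.of_abs_le_exp (c := |ν|) fun t ht => by
    simpa [abs_of_pos (cosh_pos _), abs_mul, abs_of_nonneg ht] using cosh_le_exp_abs (ν * t)

@[fun_prop]
lemma isExpBounded_sinh_mul (ν : ℝ) : IsExpBounded fun t => sinh (ν * t) :=
  IsExpBounded.of_abs_le_exp (c := |ν|) fun t ht => by
    simpa [abs_mul, abs_of_nonneg ht] using (abs_sinh_le_cosh _).trans (cosh_le_exp_abs (ν * t))

@[fun_prop]
lemma isExpBounded_sinh : IsExpBounded sinh := by
  simpa using isExpBounded_sinh_mul 1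

@[fun_prop]
lemma isExpBounded_cosh : IsExpBounded cosh := by
  simpa using isExpBounded_cosh_mul 1

lemma tendsto_mul_cosh_sub_mul_atTop {z : ℝ} (hz : 0 < z) (c : ℝ) :
    Tendsto (fun t => z * cosh t - c * t) atTop atTop := by
  have lower : ∀ t, 0 ≤ t → t * (z / 4 * t - c) ≤ z * cosh t - c * t := fun t ht => by
    have : t ^ 2 / 4 ≤ cosh t := by
      rw [cosh_eq]; nlinarith [quadratic_le_exp_of_nonneg ht, exp_pos (-t)]
    nlinarith
  refine tendsto_atTop_mono' _ (eventually_atTop.2 ⟨0, lower⟩) ?_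
  exact tendsto_id.atTop_mul_atTop₀ (tendsto_atTop_add_const_right _ _
    (tendsto_id.const_mul_atTop (by positivity)))

lemma isBigO_exp_neg_mul_cosh_mul {z : ℝ} (hz : 0 < z) {g : ℝ → ℝ} (hg : IsExpBounded g) :
    (fun t => exp (-z * cosh t) * g t) =O[atTop] fun t => exp (-1 * t) := by
  obtain ⟨c, hc⟩ := hg
  refine ((isBigO_refl _ _).mul hc).trans ?_
  simp_rw [← exp_add]
  refine (isLittleO_exp_comp_exp_comp.2 ?_).isBigO
  refine (tendsto_mul_cosh_sub_mul_atTop hz (c + 1)).congr fun t => ?_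
  ring

lemma integrableOn_exp_neg_mul_cosh_mul {z : ℝ} (hz : 0 < z) {g : ℝ → ℝ} (hg : IsExpBounded g)
    (hgc : Continuous g) : IntegrableOn (fun t => exp (-z * cosh t) * g t) (Ioi 0) :=
  integrable_of_isBigO_exp_neg one_pos (by fun_prop) (isBigO_exp_neg_mul_cosh_mul hz hg)

lemma tendsto_exp_neg_mul_cosh_mul {z : ℝ} (hz : 0 < z) {g : ℝ → ℝ} (hg : IsExpBounded g) :
    Tendsto (fun t => exp (-z * cosh t) * g t) atTop (𝓝 0) :=
  (isBigO_exp_neg_mul_cosh_mul hz hg).trans_tendsto <| by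
    simpa using tendsto_exp_neg_atTop_nhds_zero

theorem integral_Ioi_deriv_exp_neg_mul_cosh_mul {z : ℝ} (hz : 0 < z) {g g' : ℝ → ℝ}
    (hderiv : ∀ t, HasDerivAt g (g' t) t) (hg' : Continuous g')
    (hg_exp : IsExpBounded g) (hg'_exp : IsExpBounded g') :
    ∫ t in Ioi 0, exp (-z * cosh t) * (g' t - z * sinh t * g t) = -(exp (-z) * g 0) := by
  have hg : Continuous g := continuous_iff_continuousAt.2 fun t => (hderiv t).continuousAt
  have hprod : ∀ t, HasDerivAt (fun t => exp (-z * cosh t) * g t)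
      (exp (-z * cosh t) * (g' t - z * sinh t * g t)) t := fun t => by
    refine (((hasDerivAt_cosh t).const_mul (-z)).exp.fun_mul (hderiv t)).congr_deriv ?_
    ring
  have hint : IntegrableOn (fun t => exp (-z * cosh t) * (g' t - z * sinh t * g t)) (Ioi 0) :=
    integrableOn_exp_neg_mul_cosh_mul hz (by fun_prop) (by fun_prop)
  rw [integral_Ioi_of_hasDerivAt_of_tendsto' (fun t _ => hprod t) hint
    (tendsto_exp_neg_mul_cosh_mul hz hg_exp)]
  simp

lemma besselK_neg_s6 (ν z : ℝ) : besselK (-ν) z = besselK ν z := by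
  simp only [besselK, neg_mul, cosh_neg]

lemma integrableOn_besselK_integrand {z : ℝ} (hz : 0 < z) (ν : ℝ) :
    IntegrableOn (fun t => exp (-z * cosh t) * cosh (ν * t)) (Ioi 0) :=
  integrableOn_exp_neg_mul_cosh_mul hz (by fun_prop) (by fun_prop)

lemma mul_besselK_eq_integral {z : ℝ} (hz : 0 < z) (ν : ℝ) :
    ν * besselK ν z = z * ∫ t in Ioi 0, exp (-z * cosh t) * (sinh t * sinh (ν * t)) := by
  have hsinh : ∀ t, HasDerivAt (fun t => sinh (ν * t)) (ν * cosh (ν * t)) t := fun t => by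
    simpa [mul_comm] using ((hasDerivAt_id t).const_mul ν).sinh
  have hparts := integral_Ioi_deriv_exp_neg_mul_cosh_mul hz hsinh (by fun_prop) (by fun_prop)
    (by fun_prop)
  have hprod : IntegrableOn (fun t => exp (-z * cosh t) * (sinh t * sinh (ν * t))) (Ioi 0) :=
    integrableOn_exp_neg_mul_cosh_mul hz (by fun_prop) (by fun_prop)
  rw [besselK, ← sub_eq_zero, ← integral_const_mul, ← integral_const_mul,
    ← integral_sub ((integrableOn_besselK_integrand hz ν).const_mul ν) (hprod.const_mul z)]
  simpa [mul_sub, mul_assoc, mul_left_comm] using hparts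

lemma besselK_add_one {z : ℝ} (hz : 0 < z) (ν : ℝ) :
    besselK (ν + 1) z = besselK (ν - 1) z + 2 * ν / z * besselK ν z := by
  have hsum : ∀ t, sinh t * sinh (ν * t) = (cosh ((ν + 1) * t) - cosh ((ν - 1) * t)) / 2 :=
    fun t => by rw [add_mul, sub_mul, one_mul, cosh_add, cosh_sub]; ring
  have hK := mul_besselK_eq_integral hz ν
  simp_rw [hsum, mul_div_assoc', mul_sub] at hK
  rw [integral_div, integral_sub (integrableOn_besselK_integrand hz _)
    (integrableOn_besselK_integrand hz _)] at hK
  replace hK : ν * besselK ν z = z * ((besselK (ν + 1) z - besselK (ν - 1) z) / 2) := hK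
  field_simp
  linear_combination -2 * hK

lemma besselK_one_half (z : ℝ) : besselK (1 / 2) z = √(π / (2 * z)) * exp (-z) := by
  have himage : (fun t => sinh (t / 2)) '' Ioi 0 = Ioi 0 := by
    ext u
    refine ⟨fun ⟨t, ht, hu⟩ => hu ▸ sinh_pos_iff.2 (half_pos ht), fun hu => ⟨2 * arsinh u, ?_, ?_⟩⟩
    · simpa using arsinh_pos_iff.2 hu
    · simp
  have hderiv : ∀ t ∈ Ioi (0 : ℝ), HasDerivWithinAt (fun t => sinh (t / 2))
      (cosh (t / 2) / 2) (Ioi 0) t := fun t _ =>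
    ((hasDerivAt_id t).div_const 2).sinh.hasDerivWithinAt.congr_deriv (by simp [div_eq_mul_inv])
  have hinj : InjOn (fun t => sinh (t / 2)) (Ioi 0) := fun a _ b _ h => by
    simpa using sinh_injective h
  have hsubst := integral_image_eq_integral_abs_deriv_smul measurableSet_Ioi hderiv hinj
    (fun u => exp (-(2 * z) * u ^ 2))
  have hintegrand : ∀ t, |cosh (t / 2) / 2| • exp (-(2 * z) * sinh (t / 2) ^ 2) =
      exp z / 2 * (exp (-z * cosh t) * cosh (1 / 2 * t)) := fun t => by
    have hcosh : cosh t = 1 + 2 * sinh (t / 2) ^ 2 := by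
      have h := cosh_two_mul (t / 2)
      rw [mul_div_cancel₀ t two_ne_zero, cosh_sq] at h
      linarith
    have hexp : exp (-z * cosh t) * exp z = exp (-(2 * z) * sinh (t / 2) ^ 2) := by
      rw [← exp_add, hcosh]; ring_nf
    rw [abs_of_pos (by positivity), smul_eq_mul, mul_comm (1 / 2) t, ← div_eq_mul_one_div]
    linear_combination (-(cosh (t / 2) / 2)) * hexp
  simp_rw [himage, integral_gaussian_Ioi, hintegrand, integral_const_mul] at hsubst
  replace hsubst : √(π / (2 * z)) / 2 = exp z / 2 * besselK (1 / 2) z := hsubst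
  have hexp : exp z * exp (-z) = 1 := by rw [← exp_add, add_neg_cancel, exp_zero]
  linear_combination (-2 * exp (-z)) * hsubst - besselK (1 / 2) z * hexp

noncomputable def sinhMoment (z : ℝ) (m : ℕ) : ℝ :=
  ∫ t in Ioi 0, exp (-z * cosh t) * sinh t ^ m

lemma integrableOn_sinhMoment_integrand {z : ℝ} (hz : 0 < z) (m : ℕ) :
    IntegrableOn (fun t => exp (-z * cosh t) * sinh t ^ m) (Ioi 0) :=
  integrableOn_exp_neg_mul_cosh_mul hz (by fun_prop) (by fun_prop)

lemma sinhMoment_zero (z : ℝ) : sinhMoment z 0 = besselK 0 z := by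
  simp [sinhMoment, besselK]

lemma mul_sinhMoment_one {z : ℝ} (hz : 0 < z) : z * sinhMoment z 1 = exp (-z) := by
  have hparts := integral_Ioi_deriv_exp_neg_mul_cosh_mul hz (g := fun _ => 1) (g' := fun _ => 0)
    (fun t => hasDerivAt_const t 1) (by fun_prop) (by fun_prop) (by fun_prop)
  rw [sinhMoment, ← integral_const_mul]
  simpa [mul_comm, mul_left_comm, integral_neg] using hparts

lemma besselK_one_eq_mul_sinhMoment_two {z : ℝ} (hz : 0 < z) :
    besselK 1 z = z * sinhMoment z 2 := by
  simpa [sinhMoment, sq] using mul_besselK_eq_integral hz 1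

lemma sq_mul_sinhMoment_three {z : ℝ} (hz : 0 < z) :
    z ^ 2 * sinhMoment z 3 = 2 * (sinhMoment z 1 + exp (-z)) := by
  have hderiv : ∀ t, HasDerivAt (fun t => z * sinh t ^ 2 + 2 * cosh t)
      (2 * z * sinh t * cosh t + 2 * sinh t) t := fun t => by
    refine (((hasDerivAt_sinh t).fun_pow 2).const_mul z |>.add
      ((hasDerivAt_cosh t).const_mul 2)).congr_deriv ?_
    push_cast
    ring
  have hparts := integral_Ioi_deriv_exp_neg_mul_cosh_mul hz hderiv (by fun_prop) (by fun_prop)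
    (by fun_prop)
  have hsplit : ∫ t in Ioi 0, exp (-z * cosh t) *
      (2 * z * sinh t * cosh t + 2 * sinh t - z * sinh t * (z * sinh t ^ 2 + 2 * cosh t)) =
      2 * sinhMoment z 1 - z ^ 2 * sinhMoment z 3 := by
    rw [sinhMoment, sinhMoment, ← integral_const_mul, ← integral_const_mul,
      ← integral_sub ((integrableOn_sinhMoment_integrand hz 1).const_mul _)
        ((integrableOn_sinhMoment_integrand hz 3).const_mul _)]
    exact setIntegral_congr_fun measurableSet_Ioi fun t _ => by ring
  simp only [hsplit, sinh_zero, cosh_zero] at hparts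
  linear_combination -hparts

lemma sq_mul_sinhMoment_add_four {z : ℝ} (hz : 0 < z) (n : ℕ) :
    z ^ 2 * sinhMoment z (n + 4) =
      (n + 3) * ((n + 1) * sinhMoment z n + (n + 2) * sinhMoment z (n + 2)) := by
  have hderiv : ∀ t,
      HasDerivAt (fun t => z * sinh t ^ (n + 3) + (n + 3) * sinh t ^ (n + 1) * cosh t)
      ((n + 3) * (z * sinh t ^ (n + 2) * cosh t + (n + 1) * sinh t ^ n * cosh t ^ 2 +
        sinh t ^ (n + 2))) t := fun t => by
    refine (((hasDerivAt_sinh t).fun_pow (n + 3)).const_mul z |>.add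
      ((((hasDerivAt_sinh t).fun_pow (n + 1)).const_mul ((n : ℝ) + 3)).fun_mul
        (hasDerivAt_cosh t))).congr_deriv ?_
    push_cast
    ring
  have hparts := integral_Ioi_deriv_exp_neg_mul_cosh_mul hz hderiv (by fun_prop) (by fun_prop)
    (by fun_prop)
  have hI := integrableOn_sinhMoment_integrand hz
  have hsplit : ∫ t in Ioi 0, exp (-z * cosh t) *
      ((n + 3) * (z * sinh t ^ (n + 2) * cosh t + (n + 1) * sinh t ^ n * cosh t ^ 2 +
        sinh t ^ (n + 2)) -
        z * sinh t * (z * sinh t ^ (n + 3) + (n + 3) * sinh t ^ (n + 1) * cosh t)) =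
      (n + 3) * ((n + 1) * sinhMoment z n + (n + 2) * sinhMoment z (n + 2)) -
        z ^ 2 * sinhMoment z (n + 4) := by
    calc _ = ∫ t in Ioi 0, (n + 3) * ((n + 1) * (exp (-z * cosh t) * sinh t ^ n) +
          (n + 2) * (exp (-z * cosh t) * sinh t ^ (n + 2))) -
          z ^ 2 * (exp (-z * cosh t) * sinh t ^ (n + 4)) :=
        setIntegral_congr_fun measurableSet_Ioi fun t _ => by rw [cosh_sq]; ring
      _ = _ := by
        rw [integral_sub ((((hI n).const_mul _).fun_add ((hI (n + 2)).const_mul _)).const_mul _)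
          ((hI (n + 4)).const_mul _), integral_const_mul, integral_add ((hI n).const_mul _)
          ((hI (n + 2)).const_mul _), integral_const_mul, integral_const_mul, integral_const_mul]
        rfl
  rw [hsplit, sinh_zero, zero_pow (by omega), zero_pow (by omega)] at hparts
  linear_combination -hparts

noncomputable def sinhMomentCoeff (z : ℝ) (m : ℕ) : ℝ :=
  √π * (z / 2) ^ ((m : ℝ) / 2) / Gamma ((m + 1) / 2)

lemma sinhMomentCoeff_zero (z : ℝ) : sinhMomentCoeff z 0 = 1 := by
  rw [sinhMomentCoeff]
  norm_num [Gamma_one_half_eq, (sqrt_pos.2 pi_pos).ne']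

lemma sinhMomentCoeff_one (z : ℝ) : sinhMomentCoeff z 1 = √π * √(z / 2) := by
  rw [sinhMomentCoeff, Nat.cast_one, ← sqrt_eq_rpow]
  norm_num

lemma sinhMomentCoeff_add_two {z : ℝ} (hz : 0 < z) (m : ℕ) :
    sinhMomentCoeff z (m + 2) = sinhMomentCoeff z m * (z / (m + 1)) := by
  have hΓ : Gamma ((((m + 2 : ℕ) : ℝ) + 1) / 2) = (m + 1) / 2 * Gamma ((m + 1) / 2) := by
    rw [← Gamma_add_one (by positivity)]; push_cast; ring_nf
  have hpow : (z / 2) ^ (((m + 2 : ℕ) : ℝ) / 2) = (z / 2) ^ ((m : ℝ) / 2) * (z / 2) := by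
    rw [← rpow_add_one (by positivity)]; push_cast; ring_nf
  have : 0 < Gamma ((m + 1) / 2) := Gamma_pos_of_pos (by positivity)
  rw [sinhMomentCoeff, sinhMomentCoeff, hΓ, hpow]
  field_simp

theorem besselK_nat_div_two_eq {z : ℝ} (hz : 0 < z) :
    ∀ m : ℕ, besselK (m / 2) z = sinhMomentCoeff z m * sinhMoment z m
  | 0 => by simp [sinhMomentCoeff_zero, sinhMoment_zero]
  | 1 => by
    have hsqrt : √(π / (2 * z)) = √π * √(z / 2) / z := by
      rw [show π / (2 * z) = π * (z / 2) / z ^ 2 by field_simp, sqrt_div' _ (sq_nonneg z),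
        sqrt_mul pi_pos.le, sqrt_sq hz.le]
    have hS1 : sinhMoment z 1 = exp (-z) / z := by
      rw [eq_div_iff hz.ne', mul_comm, mul_sinhMoment_one hz]
    rw [sinhMomentCoeff_one, hS1, Nat.cast_one, besselK_one_half, hsqrt]
    ring
  | 2 => by
    simpa [sinhMomentCoeff_add_two hz 0, sinhMomentCoeff_zero] using
      besselK_one_eq_mul_sinhMoment_two hz
  | 3 => by
    have h1 := besselK_nat_div_two_eq hz 1
    have hK := besselK_add_one hz (1 / 2)
    rw [show (1 : ℝ) / 2 - 1 = -(1 / 2) by norm_num, besselK_neg_s6] at hK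
    have hS3 : sinhMoment z 3 = 2 * (sinhMoment z 1 + z * sinhMoment z 1) / z ^ 2 := by
      rw [eq_div_iff (by positivity), mul_comm, sq_mul_sinhMoment_three hz, mul_sinhMoment_one hz]
    rw [sinhMomentCoeff_add_two hz 1, hS3]
    push_cast at h1 ⊢
    rw [show (3 : ℝ) / 2 = 1 / 2 + 1 by norm_num, hK, h1]
    field_simp
    ring
  | n + 4 => by
    have h0 := besselK_nat_div_two_eq hz n
    have h2 := besselK_nat_div_two_eq hz (n + 2)
    have hK := besselK_add_one hz (n / 2 + 1)
    have hS : sinhMoment z (n + 4) =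
        (n + 3) * ((n + 1) * sinhMoment z n + (n + 2) * sinhMoment z (n + 2)) / z ^ 2 := by
      rw [eq_div_iff (by positivity), mul_comm, sq_mul_sinhMoment_add_four hz]
    rw [show ((n + 2 : ℕ) : ℝ) / 2 = n / 2 + 1 by push_cast; ring] at h2
    rw [add_sub_cancel_right, h0, h2] at hK
    rw [show ((n + 4 : ℕ) : ℝ) / 2 = n / 2 + 1 + 1 by push_cast; ring, hK, hS,
      sinhMomentCoeff_add_two hz (n + 2), sinhMomentCoeff_add_two hz n]
    push_cast
    field_simp
    ring

lemma map_neg_withDensity {G : Type*} [AddGroup G] [MeasurableSpace G] [MeasurableNeg G]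
    {ν : Measure G} [ν.IsNegInvariant] (f : G → ℝ≥0∞) :
    (ν.withDensity f).map Neg.neg = ν.withDensity fun x => f (-x) := by
  ext s hs
  rw [Measure.map_apply measurable_neg hs, withDensity_apply _ (measurable_neg hs),
    withDensity_apply _ hs]
  simpa using ((Measure.measurePreserving_neg ν).setLIntegral_comp_preimage_emb
    (MeasurableEquiv.neg G).measurableEmbedding (fun x => f (-x)) s)

theorem ProbabilityTheory.IndepFun.map_sub_eq_withDensity_lconvolution {Ω G : Type*}
    [MeasurableSpace Ω] {μ : Measure Ω} [IsFiniteMeasure μ] [AddGroup G] [MeasurableSpace G]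
    [MeasurableAdd₂ G] [MeasurableNeg G] {ν : Measure G} [SFinite ν] [ν.IsAddLeftInvariant]
    [ν.IsNegInvariant]
    {X Y : Ω → G} {f g : G → ℝ≥0∞} (hXY : IndepFun X Y μ) (hX : Measurable X) (hY : Measurable Y)
    (hf : Measurable f) (hg : Measurable g)
    (hXf : μ.map X = ν.withDensity f) (hYg : μ.map Y = ν.withDensity g) :
    μ.map (fun ω => X ω - Y ω) = ν.withDensity (f ⋆ₗ[ν] fun x => g (-x)) := by
  have hnegY : μ.map (-Y) = ν.withDensity fun x => g (-x) := by
    rw [← map_neg_withDensity, ← hYg, Measure.map_map measurable_neg hY]; rfl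
  rw [show (fun ω => X ω - Y ω) = X + -Y from funext fun ω => sub_eq_add_neg _ _,
    (hXY.comp measurable_id measurable_neg).map_add_eq_map_conv_map hX hY.neg, hXf, hnegY,
    conv_withDensity_eq_lconvolution hf (by fun_prop)]

lemma cosh_image_Ioi_zero : cosh '' Ioi 0 = Ioi 1 := by
  ext u
  exact ⟨fun ⟨t, ht, hu⟩ => hu ▸ one_lt_cosh.2 (ne_of_gt ht),
    fun hu => ⟨arcosh u, arcosh_pos hu, cosh_arcosh (le_of_lt hu)⟩⟩

theorem setLIntegral_Ioi_eq_lintegral_cosh {a : ℝ} (ha : 0 < a) (b : ℝ) (G : ℝ → ℝ≥0∞) :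
    ∫⁻ y in Ioi (b + a), G y = ∫⁻ t in Ioi 0, ENNReal.ofReal (a * sinh t) * G (b + a * cosh t) := by
  have himage : (fun t => b + a * cosh t) '' Ioi 0 = Ioi (b + a) := by
    rw [show (fun t => b + a * cosh t) = (b + ·) ∘ (a * ·) ∘ cosh from rfl, image_comp, image_comp,
      cosh_image_Ioi_zero, image_mul_left_Ioi ha, image_const_add_Ioi, mul_one]
  have hderiv : ∀ t ∈ Ioi (0 : ℝ), HasDerivWithinAt (fun t => b + a * cosh t) (a * sinh t)
      (Ioi 0) t := fun t _ =>
    ((hasDerivAt_cosh t).const_mul a).const_add b |>.hasDerivWithinAt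
  have hinj : InjOn (fun t => b + a * cosh t) (Ioi 0) := fun s hs t ht hst =>
    cosh_injOn (mem_Ici_of_Ioi hs) (mem_Ici_of_Ioi ht) (by simpa [ha.ne'] using hst)
  rw [← himage, lintegral_image_eq_lintegral_abs_deriv_mul measurableSet_Ioi hderiv hinj]
  refine setLIntegral_congr_fun measurableSet_Ioi fun t ht => ?_
  rw [abs_of_pos (mul_pos ha (sinh_pos_iff.2 ht))]

noncomputable def chiSqDensity (l : ℕ) (x : ℝ) : ℝ :=
  if 0 ≤ x then x ^ ((l : ℝ) / 2 - 1) * exp (-x / 2) / (2 ^ ((l : ℝ) / 2) * Gamma (l / 2)) else 0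

lemma measurable_chiSqDensity (l : ℕ) : Measurable (chiSqDensity l) :=
  Measurable.ite measurableSet_Ici (by fun_prop) (by fun_prop)

lemma chiSqDensity_nonneg (l : ℕ) (x : ℝ) : 0 ≤ chiSqDensity l x := by
  have := Gamma_nonneg_of_nonneg (s := l / 2) (by positivity)
  unfold chiSqDensity
  split_ifs <;> positivity

lemma chiSqDensity_of_neg (l : ℕ) {x : ℝ} (hx : x < 0) : chiSqDensity l x = 0 :=
  if_neg (not_le.2 hx)

lemma mul_sinh_mul_chiSqDensity_mul {w : ℝ} (hw : w ≠ 0) (m : ℕ) {t : ℝ} (ht : 0 < t) :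
    |w| / 2 * sinh t * (chiSqDensity (m + 1) (w / 2 + |w| / 2 * cosh t) *
      chiSqDensity (m + 1) (w / 2 + |w| / 2 * cosh t - w)) =
    (|w| / 2) ^ m / (2 ^ (m + 1) * Gamma ((m + 1) / 2) ^ 2) *
      (exp (-(|w| / 2) * cosh t) * sinh t ^ m) := by
  set a := |w| / 2 with ha_def
  set y := w / 2 + a * cosh t with hy_def
  have ha : 0 < a := by positivity
  have hs : 0 < sinh t := sinh_pos_iff.2 ht
  have hc : 1 < cosh t := one_lt_cosh.2 ht.ne'
  have hy : 0 < y := by nlinarith [neg_abs_le w]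
  have hyw : 0 < y - w := by nlinarith [le_abs_self w]
  have hprod : y * (y - w) = (a * sinh t) ^ 2 := by
    have : a ^ 2 = (w / 2) ^ 2 := by rw [ha_def, div_pow, sq_abs, div_pow]
    linear_combination a ^ 2 * cosh_sq t + this
  have hpow : y ^ (((m + 1 : ℕ) : ℝ) / 2 - 1) * (y - w) ^ (((m + 1 : ℕ) : ℝ) / 2 - 1) *
      (a * sinh t) = a ^ m * sinh t ^ m := by
    rw [← mul_rpow hy.le hyw.le, hprod, ← rpow_natCast _ 2, ← rpow_mul (by positivity),
      ← rpow_add_one (by positivity), ← mul_pow, ← rpow_natCast]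
    congr 1
    push_cast
    ring
  have hexp : exp (-y / 2) * exp (-(y - w) / 2) = exp (-a * cosh t) := by
    rw [← exp_add]; congr 1; ring
  have h2 : (2 : ℝ) ^ (((m + 1 : ℕ) : ℝ) / 2) * 2 ^ (((m + 1 : ℕ) : ℝ) / 2) = 2 ^ (m + 1) := by
    rw [← rpow_add two_pos, add_halves, rpow_natCast]
  rw [chiSqDensity, chiSqDensity, if_pos hy.le, if_pos hyw.le]
  calc _ = y ^ (((m + 1 : ℕ) : ℝ) / 2 - 1) * (y - w) ^ (((m + 1 : ℕ) : ℝ) / 2 - 1) * (a * sinh t) *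
        (exp (-y / 2) * exp (-(y - w) / 2)) /
        ((2 : ℝ) ^ (((m + 1 : ℕ) : ℝ) / 2) * 2 ^ (((m + 1 : ℕ) : ℝ) / 2) *
          Gamma (((m + 1 : ℕ) : ℝ) / 2) ^ 2) := by ring
    _ = _ := by rw [hpow, hexp, h2]; push_cast; ring

theorem lintegral_chiSqDensity_mul_chiSqDensity_sub {w : ℝ} (hw : w ≠ 0) (m : ℕ) :
    ∫⁻ y, ENNReal.ofReal (chiSqDensity (m + 1) y) * ENNReal.ofReal (chiSqDensity (m + 1) (y - w)) =
      ENNReal.ofReal ((|w| / 2) ^ m / (2 ^ (m + 1) * Gamma ((m + 1) / 2) ^ 2) *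
        sinhMoment (|w| / 2) m) := by
  have ha : 0 < |w| / 2 := by positivity
  have hsupport : (fun y => ENNReal.ofReal (chiSqDensity (m + 1) y) *
      ENNReal.ofReal (chiSqDensity (m + 1) (y - w))).support ⊆ Ici (w / 2 + |w| / 2) := by
    intro y hy
    contrapose! hy
    rw [mem_Ici, not_le] at hy
    rcases abs_cases w with ⟨hw', _⟩ | ⟨hw', _⟩ <;> rw [hw'] at hy
    · simp [chiSqDensity_of_neg (m + 1) (show y - w < 0 by linarith)]
    · simp [chiSqDensity_of_neg (m + 1) (show y < 0 by linarith)]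
  rw [← setLIntegral_eq_of_support_subset hsupport, ← setLIntegral_congr Ioi_ae_eq_Ici,
    setLIntegral_Ioi_eq_lintegral_cosh ha]
  have hpointwise : ∀ t ∈ Ioi (0 : ℝ), ENNReal.ofReal (|w| / 2 * sinh t) *
      (ENNReal.ofReal (chiSqDensity (m + 1) (w / 2 + |w| / 2 * cosh t)) *
        ENNReal.ofReal (chiSqDensity (m + 1) (w / 2 + |w| / 2 * cosh t - w))) =
      ENNReal.ofReal ((|w| / 2) ^ m / (2 ^ (m + 1) * Gamma ((m + 1) / 2) ^ 2) *
        (exp (-(|w| / 2) * cosh t) * sinh t ^ m)) := fun t ht => by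
    rw [← ENNReal.ofReal_mul (chiSqDensity_nonneg _ _), ← ENNReal.ofReal_mul
      (mul_nonneg ha.le (sinh_pos_iff.2 ht).le), mul_sinh_mul_chiSqDensity_mul hw m ht]
  have hnonneg : 0 ≤ᵐ[volume.restrict (Ioi 0)] fun t =>
      (|w| / 2) ^ m / (2 ^ (m + 1) * Gamma ((m + 1) / 2) ^ 2) *
        (exp (-(|w| / 2) * cosh t) * sinh t ^ m) := by
    filter_upwards [ae_restrict_mem measurableSet_Ioi] with t ht
    have := sinh_pos_iff.2 ht
    positivity
  rw [setLIntegral_congr_fun measurableSet_Ioi hpointwise, ← ofReal_integral_eq_lintegral_ofReal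
    ((integrableOn_sinhMoment_integrand ha m).const_mul _) hnonneg, integral_const_mul, sinhMoment]

lemma div_two_rpow_mul_two_mul_rpow {a : ℝ} (ha : 0 ≤ a) (m : ℕ) :
    (a / 2) ^ ((m : ℝ) / 2) * (2 * a) ^ ((m : ℝ) / 2) = a ^ m := by
  rw [← mul_rpow (by positivity) (by positivity), show a / 2 * (2 * a) = a ^ 2 by ring,
    ← rpow_natCast a 2, ← rpow_mul ha, Nat.cast_two, mul_div_cancel₀ _ two_ne_zero, rpow_natCast]

theorem lconvolution_chiSqDensity_neg {w : ℝ} (hw : w ≠ 0) (m : ℕ) :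
    ((fun x => ENNReal.ofReal (chiSqDensity (m + 1) x)) ⋆ₗ
      fun x => ENNReal.ofReal (chiSqDensity (m + 1) (-x))) w =
      ENNReal.ofReal (|w| ^ (((m + 1 : ℕ) : ℝ) / 2 - 1 / 2) *
        besselK (1 / 2 - ((m + 1 : ℕ) : ℝ) / 2) (|w| / 2) /
          (√π * 2 ^ (m + 1) * Gamma (((m + 1 : ℕ) : ℝ) / 2))) := by
  have ha : 0 < |w| / 2 := by positivity
  have hΓ : 0 < Gamma ((m + 1) / 2) := Gamma_pos_of_pos (by positivity)
  have hK : besselK (1 / 2 - ((m + 1 : ℕ) : ℝ) / 2) (|w| / 2) =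
      sinhMomentCoeff (|w| / 2) m * sinhMoment (|w| / 2) m := by
    rw [← besselK_nat_div_two_eq ha, ← besselK_neg_s6]
    push_cast
    ring_nf
  have hpow := div_two_rpow_mul_two_mul_rpow ha.le m
  rw [lconvolution_def]
  simp only [neg_add_eq_sub, neg_sub]
  rw [lintegral_chiSqDensity_mul_chiSqDensity_sub hw, hK, sinhMomentCoeff,
    show ((m + 1 : ℕ) : ℝ) / 2 - 1 / 2 = (m : ℝ) / 2 by push_cast; ring]
  rw [show 2 * (|w| / 2) = |w| by ring] at hpow
  push_cast
  rw [← hpow]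
  field_simp

theorem chiSq_diff_density {Ω : Type*} [MeasurableSpace Ω] (μ : Measure Ω)
    [IsProbabilityMeasure μ] (l : ℕ) (hl : 0 < l) (X₁ X₂ : Ω → ℝ)
    (hmeas₁ : Measurable X₁) (hmeas₂ : Measurable X₂)
    (hindep : IndepFun X₁ X₂ μ)
    (h₁ : Measure.map X₁ μ = chiSq l) (h₂ : Measure.map X₂ μ = chiSq l) :
    Measure.map (fun ω => X₁ ω - X₂ ω) μ =
      MeasureTheory.volume.withDensity fun w =>
        ENNReal.ofReal (|w| ^ ((l : ℝ) / 2 - 1 / 2) * besselK (1 / 2 - (l : ℝ) / 2) (|w| / 2) /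
          (Real.sqrt Real.pi * 2 ^ l * Real.Gamma (l / 2))) := by
  obtain ⟨m, rfl⟩ := Nat.exists_eq_add_one.2 hl
  have hf : Measurable fun x => ENNReal.ofReal (chiSqDensity (m + 1) x) :=
    (measurable_chiSqDensity _).ennreal_ofReal
  rw [hindep.map_sub_eq_withDensity_lconvolution hmeas₁ hmeas₂ hf hf h₁ h₂]
  exact withDensity_congr_ae ((volume.ae_ne 0).mono fun w hw => lconvolution_chiSqDensity_neg hw m)
end
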